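/- Let r ∈ ℝ, μ > r, σ > 0, α > 0, T > 0, θ := (μ − r)/σ, K_l ∈ ℝ, 0 ≤ t < T, and x ∈ ℝ. With d_l := (K_l − x e^{r(T−t)})·α/(θ√(T−t)), p(t,x) := Φ(d_l)(e^{−r(T−t)}K_l − x) + (θ√(T−t)/α)e^{−r(T−t)}φ(d_l), and π̃_p(t,x) := −Φ(d_l)/(σ√(T−t)(Φ(d_l)d_l + φ(d_l))), the total amount invested in the risky asset by the optimal strategy under lower constraint K_l equals (θ/(ασ))e^{−r(T−t)} + π̃_p(t,x)·p(t,x) = (θ/(ασ))e^{−r(T−t)}·(1 − Φ(d_l)). In particular it is strictly positive, strictly smaller than the optimal unconstrained amount (θ/(ασ))e^{−r(T−t)}, and equals exactly half of the unconstrained amount when x = K_l e^{−r(T−t)}. -/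

import Mathlib

open MeasureTheory ProbabilityTheory Real

/-- The standard normal cumulative distribution function. -/
noncomputable def stdNormalCDF (d : ℝ) : ℝ :=
  ((gaussianReal 0 1) (Set.Iic d)).toReal

/-- The standard normal density. -/
noncomputable def stdNormalPDF (d : ℝ) : ℝ :=
  (Real.sqrt (2 * Real.pi))⁻¹ * Real.exp (-(d ^ 2) / 2)

/-! With `τ = T - t`, the identity `x e^{rτ} = K_l - d_l θ√τ/α` turns the put price into
`p = (θ√τ/α) e^{-rτ} (Φ(d_l) d_l + φ(d_l))`, so `π̃_p p = -(θ/(ασ)) e^{-rτ} Φ(d_l)` and the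
total amount is `(θ/(ασ)) e^{-rτ} (1 - Φ(d_l))`. Its bounds are `0 < Φ < 1`, its value at
`x = K_l e^{-rτ}` is `Φ(0) = 1/2`, and the denominator of `π̃_p` does not vanish (so the
junk value `a / 0 = 0` never enters) because `Φ(d) d + φ(d) = ∫_{-∞}^d (d - s) φ(s) ds > 0`. -/

open Set Filter Topology

lemma measureReal_gaussianReal_pos (m : ℝ) {v : NNReal} (hv : v ≠ 0) {s : Set ℝ}
    (hs : volume s ≠ 0) : 0 < (gaussianReal m v).real s :=
  ENNReal.toReal_pos (fun h => hs (gaussianReal_absolutelyContinuous' m hv h)) (measure_ne_top _ _)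

lemma stdNormalCDF_eq_measureReal (d : ℝ) : stdNormalCDF d = (gaussianReal 0 1).real (Iic d) :=
  rfl

lemma stdNormalCDF_pos (d : ℝ) : 0 < stdNormalCDF d :=
  measureReal_gaussianReal_pos 0 one_ne_zero (by simp)

lemma one_sub_stdNormalCDF (d : ℝ) : 1 - stdNormalCDF d = (gaussianReal 0 1).real (Ioi d) := by
  rw [stdNormalCDF_eq_measureReal, ← compl_Iic, probReal_compl_eq_one_sub measurableSet_Iic]

lemma stdNormalCDF_lt_one (d : ℝ) : stdNormalCDF d < 1 := by
  have := measureReal_gaussianReal_pos 0 one_ne_zero (s := Ioi d) (by simp)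
  linarith [one_sub_stdNormalCDF d]

lemma stdNormalCDF_zero : stdNormalCDF 0 = 1 / 2 := by
  have := nullSingletonClass_gaussianReal (μ := 0) one_ne_zero
  have hmap : (gaussianReal 0 1).map (fun x => -x) = gaussianReal 0 1 := by
    simpa using gaussianReal_map_neg (μ := 0) (v := 1)
  have hsymm : stdNormalCDF 0 = (gaussianReal 0 1).real (Ioi 0) := calc
    stdNormalCDF 0 = ((gaussianReal 0 1).map (fun x => -x)).real (Iic 0) := by rw [hmap]; rfl
    _ = (gaussianReal 0 1).real (Ici 0) := by
      rw [map_measureReal_apply measurable_neg measurableSet_Iic, neg_preimage, neg_Iic, neg_zero]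
    _ = (gaussianReal 0 1).real (Ioi 0) := measureReal_congr Ioi_ae_eq_Ici.symm
  linarith [one_sub_stdNormalCDF 0]

lemma stdNormalPDF_eq_gaussianPDFReal : stdNormalPDF = gaussianPDFReal 0 1 := by
  ext x
  simp [stdNormalPDF, gaussianPDFReal]

lemma stdNormalPDF_pos (x : ℝ) : 0 < stdNormalPDF x := by
  rw [stdNormalPDF]
  positivity

lemma integrable_stdNormalPDF : Integrable stdNormalPDF := by
  simpa [stdNormalPDF_eq_gaussianPDFReal] using integrable_gaussianPDFReal 0 1

lemma stdNormalCDF_eq_integral (d : ℝ) : stdNormalCDF d = ∫ x in Iic d, stdNormalPDF x := by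
  rw [stdNormalCDF, gaussianReal_apply_eq_integral 0 one_ne_zero, stdNormalPDF_eq_gaussianPDFReal,
    ENNReal.toReal_ofReal (setIntegral_nonneg measurableSet_Iic fun x _ =>
      gaussianPDFReal_nonneg 0 1 x)]

lemma hasDerivAt_stdNormalPDF (x : ℝ) : HasDerivAt stdNormalPDF (-x * stdNormalPDF x) x := by
  have h : HasDerivAt (fun y : ℝ => -(y ^ 2) / 2) (-x) x :=
    ((hasDerivAt_pow 2 x).neg.div_const 2).congr_deriv (by norm_num; ring)
  exact ((h.exp).const_mul (Real.sqrt (2 * Real.pi))⁻¹).congr_deriv (by rw [stdNormalPDF]; ring)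

lemma tendsto_stdNormalPDF_atBot : Tendsto stdNormalPDF atBot (𝓝 0) := by
  have hsq : Tendsto (fun y : ℝ => y ^ 2) atBot atTop := by
    simpa only [Function.comp_def, neg_sq] using
      (tendsto_pow_atTop (α := ℝ) two_ne_zero).comp tendsto_neg_atBot_atTop
  have h := (tendsto_exp_atBot.comp
    (tendsto_neg_atTop_atBot.comp hsq |>.atBot_div_const two_pos)).const_mul
      (Real.sqrt (2 * Real.pi))⁻¹
  rw [mul_zero] at h
  exact h

lemma integrable_mul_stdNormalPDF : Integrable fun x => x * stdNormalPDF x := by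
  convert (integrable_mul_exp_neg_mul_sq (b := 1 / 2) one_half_pos).const_mul
    (Real.sqrt (2 * Real.pi))⁻¹ using 2 with x
  rw [stdNormalPDF]
  ring_nf

lemma integral_Iic_mul_stdNormalPDF (d : ℝ) :
    ∫ x in Iic d, x * stdNormalPDF x = -stdNormalPDF d := by
  have h := integral_Iic_of_hasDerivAt_of_tendsto' (a := d) (f := fun x => -stdNormalPDF x)
    (fun x _ => (hasDerivAt_stdNormalPDF x).neg.congr_deriv (by ring))
    integrable_mul_stdNormalPDF.integrableOn (by simpa using tendsto_stdNormalPDF_atBot.neg)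
  simpa using h

lemma stdNormalCDF_mul_add_stdNormalPDF_eq_integral (d : ℝ) :
    stdNormalCDF d * d + stdNormalPDF d = ∫ x in Iic d, (d - x) * stdNormalPDF x := by
  simp_rw [sub_mul]
  rw [integral_sub (integrable_stdNormalPDF.const_mul d).integrableOn
      integrable_mul_stdNormalPDF.integrableOn, integral_const_mul,
    integral_Iic_mul_stdNormalPDF, stdNormalCDF_eq_integral]
  ring

lemma stdNormalCDF_mul_add_stdNormalPDF_pos (d : ℝ) : 0 < stdNormalCDF d * d + stdNormalPDF d := by
  have hint : Integrable fun x => (d - x) * stdNormalPDF x := by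
    simp_rw [sub_mul]
    exact (integrable_stdNormalPDF.const_mul d).sub integrable_mul_stdNormalPDF
  rw [stdNormalCDF_mul_add_stdNormalPDF_eq_integral,
    setIntegral_pos_iff_support_of_nonneg_ae _ hint.integrableOn]
  · have hsupp : Iio d ⊆ Function.support (fun x => (d - x) * stdNormalPDF x) ∩ Iic d :=
      fun x (hx : x < d) => ⟨(mul_pos (sub_pos.2 hx) (stdNormalPDF_pos x)).ne', (hx.le : x ≤ d)⟩
    exact lt_of_lt_of_le (by simp) (measure_mono hsupp)
  · filter_upwards [ae_restrict_mem measurableSet_Iic] with x hx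
    exact mul_nonneg (sub_nonneg.2 hx) (stdNormalPDF_pos x).le

lemma putPrice_eq_mul {c f θ s α r τ K x d : ℝ} (hα : α ≠ 0) (hθs : θ * s ≠ 0)
    (hd : d = (K - x * exp (r * τ)) * α / (θ * s)) :
    c * (exp (-(r * τ)) * K - x) + θ * s / α * exp (-(r * τ)) * f
      = θ * s / α * exp (-(r * τ)) * (c * d + f) := by
  have hx : K - x * exp (r * τ) = d * (θ * s) / α := by
    rw [hd, div_mul_cancel₀ _ hθs, mul_div_cancel_right₀ _ hα]
  rw [show exp (-(r * τ)) * K - x = exp (-(r * τ)) * (K - x * exp (r * τ)) by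
    rw [mul_sub, mul_left_comm, ← exp_add, neg_add_cancel, exp_zero, mul_one], hx]
  ring

theorem stmt_8_general (r μ σ α T : ℝ) (hμ : r < μ) (hσ : 0 < σ) (hα : 0 < α)
    (θ : ℝ) (hθ : θ = (μ - r) / σ)
    (Kl : ℝ) (t : ℝ) (htT : t < T) (x : ℝ)
    (dl : ℝ) (hdl : dl = (Kl - x * Real.exp (r * (T - t))) * α / (θ * Real.sqrt (T - t)))
    (p : ℝ)
    (hp : p = stdNormalCDF dl * (Real.exp (-(r * (T - t))) * Kl - x)
        + θ * Real.sqrt (T - t) / α * Real.exp (-(r * (T - t))) * stdNormalPDF dl)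
    (πp : ℝ)
    (hπp : πp = -stdNormalCDF dl
        / (σ * Real.sqrt (T - t) * (stdNormalCDF dl * dl + stdNormalPDF dl))) :
    θ / (α * σ) * Real.exp (-(r * (T - t))) + πp * p
        = θ / (α * σ) * Real.exp (-(r * (T - t))) * (1 - stdNormalCDF dl)
    ∧ 0 < θ / (α * σ) * Real.exp (-(r * (T - t))) + πp * p
    ∧ θ / (α * σ) * Real.exp (-(r * (T - t))) + πp * p
        < θ / (α * σ) * Real.exp (-(r * (T - t)))
    ∧ (x = Kl * Real.exp (-(r * (T - t))) →
        θ / (α * σ) * Real.exp (-(r * (T - t))) + πp * p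
          = 1 / 2 * (θ / (α * σ) * Real.exp (-(r * (T - t))))) := by
  have hs : 0 < Real.sqrt (T - t) := Real.sqrt_pos.2 (sub_pos.2 htT)
  have hθpos : 0 < θ := hθ ▸ div_pos (sub_pos.2 hμ) hσ
  have hdenom := stdNormalCDF_mul_add_stdNormalPDF_pos dl
  have hamount : θ / (α * σ) * Real.exp (-(r * (T - t))) + πp * p
      = θ / (α * σ) * Real.exp (-(r * (T - t))) * (1 - stdNormalCDF dl) := by
    rw [hπp, hp, putPrice_eq_mul hα.ne' (by positivity) hdl]
    field_simp
    ring
  have hbase : 0 < θ / (α * σ) * Real.exp (-(r * (T - t))) := by positivity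
  refine ⟨hamount, ?_, ?_, fun hx => ?_⟩
  · rw [hamount]
    exact mul_pos hbase (sub_pos.2 (stdNormalCDF_lt_one dl))
  · rw [hamount]
    exact mul_lt_of_lt_one_right hbase (sub_lt_self 1 (stdNormalCDF_pos dl))
  · have hdl0 : dl = 0 := by
      rw [hdl, hx, mul_assoc, ← Real.exp_add, neg_add_cancel, Real.exp_zero, mul_one, sub_self,
        zero_mul, zero_div]
    rw [hamount, hdl0, stdNormalCDF_zero]
    ring

/-- The total amount invested in the risky asset by the optimal strategy under a lower
constraint `K_l` equals `(θ/(ασ))e^{-r(T-t)}(1 - Φ(d_l))`; in particular it is strictly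
positive, strictly smaller than the unconstrained amount `(θ/(ασ))e^{-r(T-t)}`, and equals
half of it when `x = K_l e^{-r(T-t)}`. -/
theorem stmt_8 (r μ σ α T : ℝ) (hμ : r < μ) (hσ : 0 < σ) (hα : 0 < α) (hT : 0 < T)
    (θ : ℝ) (hθ : θ = (μ - r) / σ)
    (Kl : ℝ) (t : ℝ) (ht0 : 0 ≤ t) (htT : t < T) (x : ℝ)
    (dl : ℝ) (hdl : dl = (Kl - x * Real.exp (r * (T - t))) * α / (θ * Real.sqrt (T - t)))
    (p : ℝ)
    (hp : p = stdNormalCDF dl * (Real.exp (-(r * (T - t))) * Kl - x)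
        + θ * Real.sqrt (T - t) / α * Real.exp (-(r * (T - t))) * stdNormalPDF dl)
    (πp : ℝ)
    (hπp : πp = -stdNormalCDF dl
        / (σ * Real.sqrt (T - t) * (stdNormalCDF dl * dl + stdNormalPDF dl))) :
    θ / (α * σ) * Real.exp (-(r * (T - t))) + πp * p
        = θ / (α * σ) * Real.exp (-(r * (T - t))) * (1 - stdNormalCDF dl)
    ∧ 0 < θ / (α * σ) * Real.exp (-(r * (T - t))) + πp * p
    ∧ θ / (α * σ) * Real.exp (-(r * (T - t))) + πp * p
        < θ / (α * σ) * Real.exp (-(r * (T - t)))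
    ∧ (x = Kl * Real.exp (-(r * (T - t))) →
        θ / (α * σ) * Real.exp (-(r * (T - t))) + πp * p
          = 1 / 2 * (θ / (α * σ) * Real.exp (-(r * (T - t))))) :=
  stmt_8_general r μ σ α T hμ hσ hα θ hθ Kl t htT x dl hdl p hp πp hπp
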